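/- Let E, F be vector lattices with E atomless and having the principal projection property, F Dedekind complete, and T : E → F an order narrow positive abstract Uryson operator. Then for every x ∈ E and every band projection ρ on F, the operator ρ ∘ π^x T is order narrow, where π^x T(e) = sup{T(y) : y a fragment of both e and x}. -/

import Mathlib

open scoped BigOperators

section Defs
variable {E F : Type*}
variable [Lattice E] [AddCommGroup E] [CovariantClass E E (· + ·) (· ≤ ·)]
variable [Lattice F] [AddCommGroup F] [CovariantClass F F (· + ·) (· ≤ ·)]

/-- Disjointness in a vector lattice: `|x| ⊓ |y| = 0`. -/
def EDisj (x y : E) : Prop := |x| ⊓ |y| = 0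

/-- `y` is a fragment (component) of `x`: `y ⊥ (x - y)`. -/
def Fragment (y x : E) : Prop := EDisj y (x - y)

/-- Orthogonally additive operator. -/
def OrthAdditive (T : E → F) : Prop := ∀ x y : E, EDisj x y → T (x + y) = T x + T y

/-- Positive (in the orthogonally additive sense). -/
def PositiveOp (T : E → F) : Prop := ∀ x : E, 0 ≤ T x

/-- Order bounded operator. -/
def OrderBoundedOp (T : E → F) : Prop :=
  ∀ a b : E, ∃ c d : F, ∀ x : E, a ≤ x → x ≤ b → c ≤ T x ∧ T x ≤ d

/-- Abstract Uryson operator: orthogonally additive and order bounded. -/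
def UrysonOp (T : E → F) : Prop := OrthAdditive T ∧ OrderBoundedOp T

/-- Lateral ideal. -/
def LateralIdeal (D : Set E) : Prop :=
  (∀ x ∈ D, ∀ y : E, Fragment y x → y ∈ D) ∧
  (∀ x ∈ D, ∀ y ∈ D, EDisj x y → x + y ∈ D)

/-- Band (order) projection on `F`. -/
def IsBandProjection (ρ : F → F) : Prop :=
  (∀ x y : F, ρ (x + y) = ρ x + ρ y) ∧ (∀ x : F, ρ (ρ x) = ρ x) ∧
  (∀ x : F, 0 ≤ x → 0 ≤ ρ x ∧ ρ x ≤ x)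

/-- Partition of unity: mutually disjoint band projections with supremum the identity. -/
def BandPartitionOfUnity {ι : Type*} (ρ : ι → F → F) : Prop :=
  (∀ i, IsBandProjection (ρ i)) ∧
  (∀ i j, i ≠ j → ∀ x : F, ρ i (ρ j x) = 0) ∧
  (∀ x : F, 0 ≤ x → IsLUB {y : F | ∃ s : Finset ι, y = ∑ i ∈ s, ρ i x} x)

/-- Weak order unit. -/
def WeakOrderUnit (u : F) : Prop := 0 ≤ u ∧ ∀ v : F, |v| ⊓ u = 0 → v = 0

/-- Order narrow operator. -/
def OrderNarrow (T : E → F) : Prop :=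
  ∀ e : E, ∃ (ι : Type) (le : ι → ι → Prop) (f g : ι → E) (u : ι → F),
    Nonempty ι ∧ (∀ a, le a a) ∧ (∀ a b c, le a b → le b c → le a c) ∧
    (∀ a b, ∃ c, le a c ∧ le b c) ∧
    (∀ a, f a + g a = e ∧ EDisj (f a) (g a)) ∧
    (∀ a b, le a b → u b ≤ u a) ∧ IsGLB (Set.range u) 0 ∧
    (∀ a, |T (f a) - T (g a)| ≤ u a)

/-- Disjointness of orthogonally additive operators, via the pointwise infimum formula. -/
def OpDisjoint (S R : E → F) : Prop :=
  ∀ f : E, IsGLB {v : F | ∃ g₁ g₂ : E, g₁ + g₂ = f ∧ EDisj g₁ g₂ ∧ v = S g₁ + R g₂} 0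

/-- `S` is a fragment of `T` in `U(E,F)`: `S ⊥ (T - S)`. -/
def OpFragment (S T : E → F) : Prop := OpDisjoint S (fun e => T e - S e)

end Defs

/-- Atomless vector lattice: every nonzero element has a nontrivial fragment. -/
def AtomlessVL (E : Type*) [Lattice E] [AddCommGroup E]
    [CovariantClass E E (· + ·) (· ≤ ·)] : Prop :=
  ∀ e : E, e ≠ 0 → ∃ y : E, Fragment y e ∧ y ≠ 0 ∧ y ≠ e

/-- Principal projection property: the band generated by any element is a projection band. -/
def HasPPP (E : Type*) [Lattice E] [AddCommGroup E]
    [CovariantClass E E (· + ·) (· ≤ ·)] : Prop :=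
  ∀ e : E, ∃ ρ : E → E,
    (∀ x y : E, ρ (x + y) = ρ x + ρ y) ∧ (∀ x : E, 0 ≤ x → 0 ≤ ρ x ∧ ρ x ≤ x) ∧
    ρ e = e ∧ (∀ x : E, EDisj x e → ρ x = 0) ∧ (∀ x : E, EDisj (x - ρ x) e)

section PiX
variable {E F : Type*}
variable [Lattice E] [AddCommGroup E] [CovariantClass E E (· + ·) (· ≤ ·)]
variable [ConditionallyCompleteLattice F] [AddCommGroup F]
variable [CovariantClass F F (· + ·) (· ≤ ·)]

/-- `π^x T (e) = sup { T y : y ⊑ e, y ⊑ x }`. -/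
noncomputable def piX (T : E → F) (x : E) : E → F :=
  fun e => sSup {v : F | ∃ y : E, Fragment y e ∧ Fragment y x ∧ v = T y}

/-- `π^D T (e) = sup { T y : y ⊑ e, y ∈ D }` for a lateral ideal `D`. -/
noncomputable def piD (T : E → F) (D : Set E) : E → F :=
  fun e => sSup {v : F | ∃ y : E, Fragment y e ∧ y ∈ D ∧ v = T y}

end PiX

/-!
By the principal projection property, `e` and `x` have a greatest common fragment `w`: the part
of `e` disjoint from the band generated by `e - x`. For every fragment `v` of `w`, `v` is then the
greatest common fragment of `(e - w) + v` and `x`, and since a positive orthogonally additive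
operator is monotone along fragments, `π^x T ((e - w) + v) = T v`. Splitting `w = p ⊔ q` by the
narrowness of `T` and `e = ((e - w) + p) ⊔ q` accordingly, the differences of `ρ ∘ π^x T` are
`ρ (T p - T q)`, dominated by `|T p - T q|` because `ρ` is a positive additive contraction.
-/

section Disjointness

section
variable {G : Type*} [Lattice G] [AddCommGroup G]

theorem EDisj.symm {a b : G} (h : EDisj a b) : EDisj b a := by
  rwa [EDisj, inf_comm]

theorem EDisj.neg_left {a c : G} (h : EDisj a c) : EDisj (-a) c := by
  rwa [EDisj, abs_neg]

end

variable {G : Type*} [Lattice G] [AddCommGroup G] [AddLeftMono G]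

theorem EDisj.zero_right (a : G) : EDisj a 0 := by
  rw [EDisj, abs_zero]
  exact inf_eq_right.2 (abs_nonneg a)

theorem inf_add_le_add_inf_of_nonneg {a b c : G} (ha : 0 ≤ a) (hb : 0 ≤ b) (hc : 0 ≤ c) :
    (a + b) ⊓ c ≤ a ⊓ c + b ⊓ c := by
  rw [inf_add, add_inf, add_inf]
  refine le_inf (le_inf inf_le_left ?_) (le_inf ?_ ?_)
  · exact inf_le_right.trans (le_add_of_nonneg_left ha)
  · exact inf_le_right.trans (le_add_of_nonneg_right hb)
  · exact inf_le_right.trans (le_add_of_nonneg_left hc)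

theorem EDisj.mono_left {a b c : G} (h : |a| ≤ |b|) (hbc : EDisj b c) : EDisj a c :=
  le_antisymm ((inf_le_inf_right _ h).trans_eq hbc) (le_inf (abs_nonneg a) (abs_nonneg c))

theorem EDisj.add_left {a b c : G} (h₁ : EDisj a c) (h₂ : EDisj b c) : EDisj (a + b) c := by
  refine le_antisymm ?_ (le_inf (abs_nonneg _) (abs_nonneg c))
  calc |a + b| ⊓ |c| ≤ (|a| + |b|) ⊓ |c| := inf_le_inf_right _ (abs_add_le a b)
    _ ≤ |a| ⊓ |c| + |b| ⊓ |c| :=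
      inf_add_le_add_inf_of_nonneg (abs_nonneg a) (abs_nonneg b) (abs_nonneg c)
    _ = 0 := by rw [h₁, h₂, add_zero]

theorem EDisj.sub_left {a b c : G} (h₁ : EDisj a c) (h₂ : EDisj b c) : EDisj (a - b) c := by
  rw [sub_eq_add_neg]
  exact h₁.add_left h₂.neg_left

theorem EDisj.add_right {a b c : G} (h₁ : EDisj c a) (h₂ : EDisj c b) : EDisj c (a + b) :=
  (h₁.symm.add_left h₂.symm).symm

theorem EDisj.sub_right {a b c : G} (h₁ : EDisj c a) (h₂ : EDisj c b) : EDisj c (a - b) :=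
  (h₁.symm.sub_left h₂.symm).symm

theorem EDisj.abs_le_abs_add {a b : G} (h : EDisj a b) : |b| ≤ |a + b| := by
  have hb : |b| ≤ |a + b| + |a| := by
    simpa [abs_neg] using abs_add_le (a + b) (-a)
  calc |b| = (|a + b| + |a|) ⊓ |b| := (inf_eq_right.2 hb).symm
    _ ≤ |a + b| ⊓ |b| + |a| ⊓ |b| :=
      inf_add_le_add_inf_of_nonneg (abs_nonneg _) (abs_nonneg _) (abs_nonneg _)
    _ = |a + b| ⊓ |b| := by rw [h, add_zero]
    _ ≤ |a + b| := inf_le_left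

end Disjointness

namespace Fragment

variable {G : Type*} [Lattice G] [AddCommGroup G]

theorem of_add_eq_left {p q w : G} (hpq : p + q = w) (hd : EDisj p q) : Fragment p w := by
  rwa [Fragment, ← hpq, add_sub_cancel_left]

theorem of_add_eq_right {p q w : G} (hpq : p + q = w) (hd : EDisj p q) : Fragment q w := by
  rwa [Fragment, ← hpq, add_sub_cancel_right, EDisj, inf_comm]

variable [AddLeftMono G]

theorem refl (a : G) : Fragment a a := by
  rw [Fragment, sub_self]
  exact EDisj.zero_right a

theorem abs_le {y a : G} (h : Fragment y a) : |y| ≤ |a| := by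
  simpa using h.symm.abs_le_abs_add

theorem trans {y a b : G} (h₁ : Fragment y a) (h₂ : Fragment a b) : Fragment y b := by
  have h : EDisj y ((a - y) + (b - a)) := h₁.add_right (h₂.mono_left h₁.abs_le)
  rwa [sub_add_sub_cancel'] at h

theorem extend_split {w e p q : G} (hw : Fragment w e) (hpq : p + q = w) (hd : EDisj p q) :
    e - w + p + q = e ∧ EDisj (e - w + p) q := by
  refine ⟨by rw [add_assoc, hpq, sub_add_cancel], ?_⟩
  have hq : EDisj q (e - w) := hw.mono_left (of_add_eq_right hpq hd).abs_le
  exact hq.symm.add_left hd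

end Fragment

theorem map_sub_of_map_add {G H : Type*} [AddGroup G] [AddGroup H] {f : G → H}
    (hf : ∀ a b, f (a + b) = f a + f b) (a b : G) : f (a - b) = f a - f b :=
  (AddMonoidHom.mk' f hf).map_sub a b

section PrincipalProjection

variable {G : Type*} [Lattice G] [AddCommGroup G] {π : G → G} {d : G}

theorem projection_idem (hadd : ∀ a b, π (a + b) = π a + π b)
    (hkill : ∀ a, EDisj a d → π a = 0) (hfrag : ∀ a, EDisj (a - π a) d) (a : G) :
    π (π a) = π a := by
  have h := hkill _ (hfrag a)
  rwa [map_sub_of_map_add hadd, sub_eq_zero, eq_comm] at h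

variable [AddLeftMono G]

theorem EDisj.projection_of_nonneg (hadd : ∀ a b, π (a + b) = π a + π b)
    (hpos : ∀ a, 0 ≤ a → 0 ≤ π a ∧ π a ≤ a) (hkill : ∀ a, EDisj a d → π a = 0)
    (hfrag : ∀ a, EDisj (a - π a) d) {w a : G} (hwd : EDisj w d) (ha : 0 ≤ a) :
    EDisj w (π a) := by
  have hπa : 0 ≤ π a := (hpos a ha).1
  set v := |w| ⊓ π a
  have hv : 0 ≤ v := le_inf (abs_nonneg w) hπa
  -- `v` lies both in the band of `d` (below `π a`) and in its disjoint complement (below `|w|`).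
  have hπv : π v = 0 := hkill v (hwd.mono_left (by rw [abs_of_nonneg hv]; exact inf_le_left))
  have hle : π (π a - v) ≤ π a - v := (hpos _ (sub_nonneg.2 inf_le_right)).2
  rw [map_sub_of_map_add hadd,
    projection_idem hadd hkill hfrag, hπv, sub_zero] at hle
  rw [EDisj, abs_of_nonneg hπa]
  exact le_antisymm (by simpa using hle) hv

theorem EDisj.projection (hadd : ∀ a b, π (a + b) = π a + π b)
    (hpos : ∀ a, 0 ≤ a → 0 ≤ π a ∧ π a ≤ a) (hkill : ∀ a, EDisj a d → π a = 0)
    (hfrag : ∀ a, EDisj (a - π a) d) {w : G} (hwd : EDisj w d) (a : G) :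
    EDisj w (π a) := by
  rw [← posPart_sub_negPart a, map_sub_of_map_add hadd]
  exact (hwd.projection_of_nonneg hadd hpos hkill hfrag (posPart_nonneg a)).sub_right
    (hwd.projection_of_nonneg hadd hpos hkill hfrag (negPart_nonneg a))

end PrincipalProjection

section GreatestCommonFragment

variable {G : Type*} [Lattice G] [AddCommGroup G]

def IsGreatestCommonFragment (w e x : G) : Prop :=
  Fragment w e ∧ Fragment w x ∧ ∀ y, Fragment y e → Fragment y x → Fragment y w

variable [AddLeftMono G]

theorem isGreatestCommonFragment_self {q x : G} (h : Fragment q x) :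
    IsGreatestCommonFragment q q x :=
  ⟨.refl q, h, fun _ hy _ => hy⟩

theorem exists_isGreatestCommonFragment (hppp : HasPPP G) (e x : G) :
    ∃ w, IsGreatestCommonFragment w e x := by
  obtain ⟨π, hadd, hpos, hπd, hkill, hfrag⟩ := hppp (e - x)
  have hband : ∀ {v : G}, EDisj v (e - x) → ∀ a, EDisj v (π a) :=
    fun hv => hv.projection hadd hpos hkill hfrag
  have hπx : π x = x - (e - π e) := by
    have h := hadd x (e - x)
    rw [add_sub_cancel, hπd] at h
    rw [h]; abel
  refine ⟨e - π e, ?_, ?_, fun y hye hyx => ?_⟩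
  · rw [Fragment, sub_sub_cancel]
    exact hband (hfrag e) e
  · rw [Fragment, ← hπx]
    exact hband (hfrag e) x
  · have hyd : EDisj y (e - x) := by
      simpa using hye.sub_right hyx
    have h := hye.sub_right (hband hyd e)
    rwa [sub_right_comm] at h

theorem IsGreatestCommonFragment.of_fragment {v w e x : G} (h : IsGreatestCommonFragment w e x)
    (hv : Fragment v w) : IsGreatestCommonFragment v (e - w + v) x := by
  obtain ⟨hwe, hwx, hmax⟩ := h
  have hvz : EDisj v (e - w) := hwe.mono_left hv.abs_le
  have hwv : Fragment (w - v) w := .of_add_eq_right (add_sub_cancel v w) hv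
  have hzv : EDisj (e - w + v) (w - v) := (hwe.mono_left hwv.abs_le).symm.add_left hv
  refine ⟨by rwa [Fragment, add_sub_cancel_right], hv.trans hwx, fun y hy hyx => ?_⟩
  have hyw : EDisj y (w - v) := hzv.mono_left hy.abs_le
  have hye : Fragment y e := by
    have h := hy.add_right hyw
    rwa [show e - w + v - y + (w - v) = e - y by abel] at h
  have h := (hmax y hye hyx).sub_right hyw
  rwa [sub_sub_sub_cancel_left] at h

end GreatestCommonFragment

section Operators

variable {E F : Type*} [Lattice E] [AddCommGroup E]

theorem OrthAdditive.le_of_fragment [Lattice F] [AddCommGroup F] [AddLeftMono F] {T : E → F}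
    (hT : OrthAdditive T) (hTp : PositiveOp T) {y c : E} (h : Fragment y c) : T y ≤ T c := by
  have h := hT y (c - y) h
  rw [add_sub_cancel] at h
  rw [h]
  exact le_add_of_nonneg_right (hTp _)

theorem piX_eq_of_isGreatestCommonFragment [ConditionallyCompleteLattice F] [AddCommGroup F]
    [AddLeftMono F] {T : E → F} (hT : OrthAdditive T) (hTp : PositiveOp T) {w e x : E}
    (h : IsGreatestCommonFragment w e x) : piX T x e = T w := by
  refine IsGreatest.csSup_eq ⟨⟨w, h.1, h.2.1, rfl⟩, ?_⟩
  rintro v ⟨y, hye, hyx, rfl⟩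
  exact hT.le_of_fragment hTp (h.2.2 y hye hyx)

end Operators

namespace IsBandProjection

variable {F : Type*} [Lattice F] [AddCommGroup F] [AddLeftMono F] {ρ : F → F}

theorem abs_le (hρ : IsBandProjection ρ) (v : F) : |ρ v| ≤ |v| := by
  have hpos := hρ.2.2 _ (posPart_nonneg v)
  have hneg := hρ.2.2 _ (negPart_nonneg v)
  calc |ρ v| = |ρ v⁺ - ρ v⁻| := by rw [← map_sub_of_map_add hρ.1, posPart_sub_negPart]
    _ ≤ |ρ v⁺| + |ρ v⁻| := by simpa [sub_eq_add_neg] using abs_add_le (ρ v⁺) (-ρ v⁻)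
    _ = ρ v⁺ + ρ v⁻ := by rw [abs_of_nonneg hpos.1, abs_of_nonneg hneg.1]
    _ ≤ v⁺ + v⁻ := add_le_add hpos.2 hneg.2
    _ = |v| := posPart_add_negPart v

theorem abs_sub_le (hρ : IsBandProjection ρ) (a b : F) : |ρ a - ρ b| ≤ |a - b| := by
  rw [← map_sub_of_map_add hρ.1]
  exact hρ.abs_le _

end IsBandProjection

theorem piX_of_narrow_is_narrow_general {E F : Type*} [Lattice E] [AddCommGroup E] [CovariantClass E E (· + ·) (· ≤ ·)] [ConditionallyCompleteLattice F] [AddCommGroup F] [CovariantClass F F (· + ·) (· ≤ ·)]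
    (hppp : HasPPP E)
    (T : E → F) (hT : UrysonOp T) (hTp : PositiveOp T) (hnar : OrderNarrow T)
    (x : E) (ρ : F → F) (hρ : IsBandProjection ρ) :
    OrderNarrow (fun e => ρ (piX T x e)) := by
  intro e
  obtain ⟨w, hw⟩ := exists_isGreatestCommonFragment hppp e x
  obtain ⟨ι, le, p, q, u, hne, hrefl, htrans, hdir, hsplit, hanti, hglb, hbound⟩ := hnar w
  refine ⟨ι, le, fun a => e - w + p a, q, u, hne, hrefl, htrans, hdir,
    fun a => hw.1.extend_split (hsplit a).1 (hsplit a).2, hanti, hglb, fun a => ?_⟩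
  have hp : Fragment (p a) w := .of_add_eq_left (hsplit a).1 (hsplit a).2
  have hq : Fragment (q a) w := .of_add_eq_right (hsplit a).1 (hsplit a).2
  dsimp only
  rw [piX_eq_of_isGreatestCommonFragment hT.1 hTp (hw.of_fragment hp),
    piX_eq_of_isGreatestCommonFragment hT.1 hTp (isGreatestCommonFragment_self (hq.trans hw.2.1))]
  exact (hρ.abs_sub_le _ _).trans (hbound a)

theorem piX_of_narrow_is_narrow {E F : Type*} [Lattice E] [AddCommGroup E] [CovariantClass E E (· + ·) (· ≤ ·)] [Module ℝ E] [ConditionallyCompleteLattice F] [AddCommGroup F] [CovariantClass F F (· + ·) (· ≤ ·)] [Module ℝ F]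
    (hA : AtomlessVL E) (hppp : HasPPP E)
    (T : E → F) (hT : UrysonOp T) (hTp : PositiveOp T) (hnar : OrderNarrow T)
    (x : E) (ρ : F → F) (hρ : IsBandProjection ρ) :
    OrderNarrow (fun e => ρ (piX T x e)) :=
  piX_of_narrow_is_narrow_general hppp T hT hTp hnar x ρ hρ
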